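/- For each i in an index set I, let (M_i, D_i) be a W*-inclusion acting on a Hilbert space H_i. If (M_i, D_i) is norming for every i ∈ I, then the direct sum inclusion (⊕_{i∈I} M_i, ⊕_{i∈I} D_i), consisting of bounded block-diagonal operators acting on the Hilbert space direct sum ⊕_{i∈I} H_i (with the ℓ∞-direct sums of the algebras), is norming. -/

import Mathlib

set_option synthInstance.maxHeartbeats 1000000
set_option maxHeartbeats 2000000
set_option linter.unusedSectionVars false


/-- The operator on the Hilbert column space `E^n` (with its ℓ²-norm) induced by an
`m × n` matrix of bounded operators on `E`; this realizes the canonical C*-norm on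
matrices over a concrete C*-algebra of operators. -/
noncomputable def matOp {E : Type*} [NormedAddCommGroup E] [InnerProductSpace ℂ E]
    {m n : ℕ} (X : Matrix (Fin m) (Fin n) (E →L[ℂ] E)) :
    (PiLp 2 fun _ : Fin n => E) →L[ℂ] (PiLp 2 fun _ : Fin m => E) :=
  ((PiLp.continuousLinearEquiv 2 ℂ (fun _ : Fin m => E)).symm.toContinuousLinearMap) ∘L
    (ContinuousLinearMap.pi fun i => ∑ j, (X i j) ∘L (ContinuousLinearMap.proj j)) ∘L
    ((PiLp.continuousLinearEquiv 2 ℂ (fun _ : Fin n => E)).toContinuousLinearMap)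

/-- `Dset` norms `Cset`: the norm of every matrix over `Cset` is the supremum of the
norms of its compressions by contractive rows and columns over `Dset`. -/
def NormsPair {E : Type*} [NormedAddCommGroup E] [InnerProductSpace ℂ E]
    (Dset Cset : Set (E →L[ℂ] E)) : Prop :=
  ∀ (d : ℕ) (X : Matrix (Fin d) (Fin d) (E →L[ℂ] E)), (∀ i j, X i j ∈ Cset) →
    ‖matOp X‖ = sSup {r : ℝ |
      ∃ (R : Matrix (Fin 1) (Fin d) (E →L[ℂ] E)) (C₀ : Matrix (Fin d) (Fin 1) (E →L[ℂ] E)),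
        (∀ i j, R i j ∈ Dset) ∧ (∀ i j, C₀ i j ∈ Dset) ∧
        ‖matOp R‖ ≤ 1 ∧ ‖matOp C₀‖ ≤ 1 ∧ r = ‖matOp (R * X * C₀)‖}

/-- The ℓ∞-direct sum of the algebras `A i`, realized as the set of block-diagonal bounded
operators on the Hilbert space direct sum `ℓ²(⊕ H i)` whose i-th block lies in `A i`. -/
def blockDiagSet {I : Type*} (H : I → Type*) [∀ i, NormedAddCommGroup (H i)]
    [∀ i, InnerProductSpace ℂ (H i)] [∀ i, CompleteSpace (H i)]
    (A : ∀ i, Set (H i →L[ℂ] H i)) :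
    Set (lp (fun i => H i) 2 →L[ℂ] lp (fun i => H i) 2) :=
  {T | ∀ i, ∃ x ∈ A i, ∀ f : lp (fun i => H i) 2, (T f) i = x (f i)}

section auxiliary
variable {E : Type*} [NormedAddCommGroup E] [InnerProductSpace ℂ E]

theorem matOp_apply {m n : ℕ} (X : Matrix (Fin m) (Fin n) (E →L[ℂ] E))
    (v : PiLp 2 fun _ : Fin n => E) (k : Fin m) :
    matOp X v k = ∑ j, X k j (v j) := by
  simp [matOp, ContinuousLinearMap.sum_apply]

theorem matOp_mul {m n p : ℕ} (A : Matrix (Fin m) (Fin n) (E →L[ℂ] E))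
    (B : Matrix (Fin n) (Fin p) (E →L[ℂ] E)) :
    matOp (A * B) = (matOp A).comp (matOp B) := by
  refine ContinuousLinearMap.ext fun v => PiLp.ext fun k => ?_
  simp only [ContinuousLinearMap.comp_apply, matOp_apply, Matrix.mul_apply,
    ContinuousLinearMap.sum_apply, ContinuousLinearMap.mul_apply, map_sum]
  rw [Finset.sum_comm]

theorem matOp_zero {m n : ℕ} : matOp (0 : Matrix (Fin m) (Fin n) (E →L[ℂ] E)) = 0 := by
  refine ContinuousLinearMap.ext fun v => PiLp.ext fun k => ?_
  simp [matOp_apply]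

section lpstuff
open scoped Classical
variable {I : Type*} {H : I → Type*} [∀ i, NormedAddCommGroup (H i)]
  [∀ i, InnerProductSpace ℂ (H i)] [∀ i, CompleteSpace (H i)]

theorem lp_single_add (i : I) (a b : H i) :
    lp.single 2 i (a + b) = lp.single 2 i a + lp.single 2 i b := by
  apply lp.ext
  funext j
  by_cases h : j = i
  · subst h; simp [lp.single_apply_self, lp.coeFn_add]
  · simp [lp.single_apply_ne _ _ _ h, lp.coeFn_add]

theorem lp_norm_single (i : I) (a : H i) : ‖lp.single 2 i a‖ = ‖a‖ := by
  have h := lp.norm_single (E := H) (p := 2) (by norm_num) i a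
  simpa using h

noncomputable def singleBlock (i : I) (x : H i →L[ℂ] H i) :
    lp (fun i => H i) 2 →L[ℂ] lp (fun i => H i) 2 :=
  LinearMap.mkContinuous
    { toFun := fun f => lp.single 2 i (x (f i))
      map_add' := fun f g => by
        simp only []
        rw [show ((f + g : lp (fun i => H i) 2) i) = f i + g i from by
          rw [lp.coeFn_add]; rfl, map_add, lp_single_add]
      map_smul' := fun c f => by
        simp only []
        rw [show ((c • f : lp (fun i => H i) 2) i) = c • f i from by
          rw [lp.coeFn_smul]; rfl, map_smul, RingHom.id_apply, lp.single_smul] }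
    ‖x‖ (fun f => by
      simp only [LinearMap.coe_mk, AddHom.coe_mk]
      rw [lp_norm_single]
      exact (x.le_opNorm _).trans
        (mul_le_mul_of_nonneg_left (lp.norm_apply_le_norm (by norm_num) f i) (norm_nonneg x)))

theorem singleBlock_apply (i : I) (x : H i →L[ℂ] H i) (f : lp (fun i => H i) 2) :
    singleBlock i x f = lp.single 2 i (x (f i)) := rfl

end lpstuff

section rep
open scoped Classical
variable {I : Type*} {H : I → Type*} [∀ i, NormedAddCommGroup (H i)]
  [∀ i, InnerProductSpace ℂ (H i)] [∀ i, CompleteSpace (H i)]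

/-- `x` is the family of diagonal blocks of the matrix `T` of block-diagonal operators. -/
def BRep {m n : ℕ} (T : Matrix (Fin m) (Fin n) (lp (fun i => H i) 2 →L[ℂ] lp (fun i => H i) 2))
    (x : ∀ i, Matrix (Fin m) (Fin n) (H i →L[ℂ] H i)) : Prop :=
  ∀ (k : Fin m) (j : Fin n) (i : I) (f : lp (fun i => H i) 2), (T k j f) i = x i k j (f i)

theorem lp_coord_sum {n : ℕ} (F : Fin n → lp (fun i => H i) 2) (i : I) :
    (((∑ j, F j : lp (fun i => H i) 2)) i) = ∑ j, (F j) i := by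
  rw [lp.coeFn_sum]; simp

theorem BRep.mul {m n p : ℕ}
    {T : Matrix (Fin m) (Fin n) (lp (fun i => H i) 2 →L[ℂ] lp (fun i => H i) 2)}
    {S : Matrix (Fin n) (Fin p) (lp (fun i => H i) 2 →L[ℂ] lp (fun i => H i) 2)}
    {x : ∀ i, Matrix (Fin m) (Fin n) (H i →L[ℂ] H i)}
    {y : ∀ i, Matrix (Fin n) (Fin p) (H i →L[ℂ] H i)}
    (hT : BRep T x) (hS : BRep S y) : BRep (T * S) (fun i => x i * y i) := by
  intro k j i f
  have : ((T * S) k j) f = ∑ l, T k l (S l j f) := by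
    rw [Matrix.mul_apply]; simp [ContinuousLinearMap.sum_apply]
  rw [this, lp_coord_sum]
  show _ = ((x i * y i) k j) (f i)
  rw [Matrix.mul_apply, ContinuousLinearMap.sum_apply]
  exact Finset.sum_congr rfl fun l _ => by
    rw [hT, hS]; rfl

theorem vec_hasSum {n : ℕ} (v : PiLp 2 fun _ : Fin n => lp (fun i => H i) 2)
    (g : ∀ i, PiLp 2 fun _ : Fin n => H i) (hg : ∀ i j, g i j = v j i) :
    HasSum (fun i => ‖g i‖ ^ 2) (‖v‖ ^ 2) := by
  have h1 : ∀ j : Fin n, HasSum (fun i => ‖v j i‖ ^ 2) (‖v j‖ ^ 2) := by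
    intro j
    have := lp.hasSum_norm (p := 2) (by norm_num) (v j)
    simpa [ENNReal.toReal_ofNat, Real.rpow_natCast] using this
  have h2 : HasSum (fun i => ∑ j, ‖v j i‖ ^ 2) (∑ j, ‖v j‖ ^ 2) :=
    hasSum_sum (fun j _ => h1 j)
  have e1 : (∑ j, ‖v j‖ ^ 2) = ‖v‖ ^ 2 := (PiLp.norm_sq_eq_of_L2 _ v).symm
  have e2 : ∀ i, (∑ j, ‖v j i‖ ^ 2) = ‖g i‖ ^ 2 := by
    intro i
    rw [PiLp.norm_sq_eq_of_L2]
    exact Finset.sum_congr rfl fun j _ => by rw [hg]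
  rw [← e1]
  exact h2.congr_fun fun i => (e2 i).symm

theorem rep_hasSum {m n : ℕ}
    {T : Matrix (Fin m) (Fin n) (lp (fun i => H i) 2 →L[ℂ] lp (fun i => H i) 2)}
    {x : ∀ i, Matrix (Fin m) (Fin n) (H i →L[ℂ] H i)} (hrep : BRep T x)
    (v : PiLp 2 fun _ : Fin n => lp (fun i => H i) 2)
    (g : ∀ i, PiLp 2 fun _ : Fin n => H i) (hg : ∀ i j, g i j = v j i) :
    HasSum (fun i => ‖matOp (x i) (g i)‖ ^ 2) (‖matOp T v‖ ^ 2) := by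
  have h1 : ∀ k : Fin m, HasSum (fun i => ‖(matOp T v) k i‖ ^ 2) (‖(matOp T v) k‖ ^ 2) := by
    intro k
    have := lp.hasSum_norm (p := 2) (by norm_num) ((matOp T v) k)
    simpa [ENNReal.toReal_ofNat, Real.rpow_natCast] using this
  have h2 : HasSum (fun i => ∑ k, ‖(matOp T v) k i‖ ^ 2) (∑ k, ‖(matOp T v) k‖ ^ 2) :=
    hasSum_sum (fun k _ => h1 k)
  have e1 : (∑ k, ‖(matOp T v) k‖ ^ 2) = ‖matOp T v‖ ^ 2 :=
    (PiLp.norm_sq_eq_of_L2 _ (matOp T v)).symm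
  have ecoord : ∀ (i : I) (k : Fin m), ((matOp T v) k) i = (matOp (x i) (g i)) k := by
    intro i k
    rw [matOp_apply, matOp_apply, lp_coord_sum]
    exact Finset.sum_congr rfl fun j _ => by rw [hrep, hg]
  have e2 : ∀ i, (∑ k, ‖(matOp T v) k i‖ ^ 2) = ‖matOp (x i) (g i)‖ ^ 2 := by
    intro i
    rw [PiLp.norm_sq_eq_of_L2]
    exact Finset.sum_congr rfl fun k _ => by rw [ecoord]
  rw [← e1]
  exact h2.congr_fun fun i => (e2 i).symm

theorem rep_norm_le {m n : ℕ}
    {T : Matrix (Fin m) (Fin n) (lp (fun i => H i) 2 →L[ℂ] lp (fun i => H i) 2)}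
    {x : ∀ i, Matrix (Fin m) (Fin n) (H i →L[ℂ] H i)} (hrep : BRep T x)
    {C : ℝ} (hC : 0 ≤ C) (hx : ∀ i, ‖matOp (x i)‖ ≤ C) : ‖matOp T‖ ≤ C := by
  refine ContinuousLinearMap.opNorm_le_bound _ hC fun v => ?_
  set g : ∀ i, PiLp 2 (fun _ : Fin n => H i) :=
    fun i => (WithLp.equiv 2 _).symm fun j => v j i with hgdef
  have hg : ∀ i j, g i j = v j i := fun i j => rfl
  have h1 := rep_hasSum hrep v g hg
  have h2 := vec_hasSum v g hg
  have h3 : ‖matOp T v‖ ^ 2 ≤ C ^ 2 * ‖v‖ ^ 2 := by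
    refine hasSum_le (fun i => ?_) h1 (h2.mul_left (C ^ 2))
    have hle : ‖matOp (x i) (g i)‖ ≤ C * ‖g i‖ :=
      ((matOp (x i)).le_opNorm (g i)).trans
        (mul_le_mul_of_nonneg_right (hx i) (norm_nonneg _))
    nlinarith [norm_nonneg (matOp (x i) (g i)), norm_nonneg (g i)]
  nlinarith [norm_nonneg (matOp T v), norm_nonneg v, mul_nonneg hC (norm_nonneg v)]

theorem rep_norm_ge {m n : ℕ}
    {T : Matrix (Fin m) (Fin n) (lp (fun i => H i) 2 →L[ℂ] lp (fun i => H i) 2)}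
    {x : ∀ i, Matrix (Fin m) (Fin n) (H i →L[ℂ] H i)} (hrep : BRep T x)
    (i₀ : I) : ‖matOp (x i₀)‖ ≤ ‖matOp T‖ := by
  refine ContinuousLinearMap.opNorm_le_bound _ (norm_nonneg (matOp T)) fun w => ?_
  set v : PiLp 2 (fun _ : Fin n => lp (fun i => H i) 2) :=
    (WithLp.equiv 2 _).symm (fun j => lp.single 2 i₀ (w j)) with hvdef
  have hv : ∀ j, v j = lp.single 2 i₀ (w j) := fun j => rfl
  set g : ∀ i, PiLp 2 (fun _ : Fin n => H i) :=
    fun i => (WithLp.equiv 2 _).symm fun j => v j i with hgdef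
  have hg : ∀ i j, g i j = v j i := fun i j => rfl
  have h1 := rep_hasSum hrep v g hg
  have h2 := vec_hasSum v g hg
  have hgi₀ : g i₀ = w := by
    refine PiLp.ext fun j => ?_
    rw [hg, hv, lp.single_apply_self]
  have h3 : ‖matOp (x i₀) w‖ ^ 2 ≤ ‖matOp T v‖ ^ 2 := by
    rw [← hgi₀]
    exact le_hasSum h1 i₀ fun i _ => by positivity
  have h4 : ‖v‖ ^ 2 = ‖w‖ ^ 2 := by
    refine (h2.unique (hasSum_single i₀ fun i hi => ?_)).trans (by rw [hgi₀])
    have : ∀ j : Fin n, g i j = 0 := fun j => by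
      rw [hg, hv, lp.single_apply_ne _ _ _ hi]
    have : ‖g i‖ ^ 2 = 0 := by
      rw [PiLp.norm_sq_eq_of_L2]
      exact Finset.sum_eq_zero fun j _ => by rw [this j, norm_zero]; ring
    simpa using this
  have h5 : ‖matOp T v‖ ≤ ‖matOp T‖ * ‖w‖ := by
    have := (matOp T).le_opNorm v
    have hnv : ‖v‖ = ‖w‖ := by
      nlinarith [norm_nonneg v, norm_nonneg w]
    rwa [hnv] at this
  nlinarith [norm_nonneg (matOp (x i₀) w), norm_nonneg (matOp T v),
    mul_nonneg (norm_nonneg (matOp T)) (norm_nonneg w)]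

end rep

theorem zero_mem_normSet {E : Type*} [NormedAddCommGroup E] [InnerProductSpace ℂ E]
    {Dset : Set (E →L[ℂ] E)} (h0 : (0 : E →L[ℂ] E) ∈ Dset) (d : ℕ)
    (X : Matrix (Fin d) (Fin d) (E →L[ℂ] E)) :
    (0 : ℝ) ∈ {r : ℝ |
      ∃ (R : Matrix (Fin 1) (Fin d) (E →L[ℂ] E)) (C₀ : Matrix (Fin d) (Fin 1) (E →L[ℂ] E)),
        (∀ i j, R i j ∈ Dset) ∧ (∀ i j, C₀ i j ∈ Dset) ∧
        ‖matOp R‖ ≤ 1 ∧ ‖matOp C₀‖ ≤ 1 ∧ r = ‖matOp (R * X * C₀)‖} := by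
  refine ⟨0, 0, fun _ _ => h0, fun _ _ => h0, ?_, ?_, ?_⟩ <;>
    simp [matOp_zero, Matrix.zero_mul, Matrix.mul_zero, ContinuousLinearMap.opNorm_zero, norm_zero, zero_le_one]

theorem mem_normSet_le {E : Type*} [NormedAddCommGroup E] [InnerProductSpace ℂ E]
    {Dset : Set (E →L[ℂ] E)} {d : ℕ} {X : Matrix (Fin d) (Fin d) (E →L[ℂ] E)} {r : ℝ}
    (hr : r ∈ {r : ℝ |
      ∃ (R : Matrix (Fin 1) (Fin d) (E →L[ℂ] E)) (C₀ : Matrix (Fin d) (Fin 1) (E →L[ℂ] E)),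
        (∀ i j, R i j ∈ Dset) ∧ (∀ i j, C₀ i j ∈ Dset) ∧
        ‖matOp R‖ ≤ 1 ∧ ‖matOp C₀‖ ≤ 1 ∧ r = ‖matOp (R * X * C₀)‖}) :
    r ≤ ‖matOp X‖ := by
  obtain ⟨R, C₀, -, -, hR, hC, rfl⟩ := hr
  calc ‖matOp (R * X * C₀)‖ = ‖(matOp (R * X)).comp (matOp C₀)‖ := by rw [matOp_mul]
    _ ≤ ‖matOp (R * X)‖ * ‖matOp C₀‖ := ContinuousLinearMap.opNorm_comp_le _ _
    _ ≤ ‖matOp (R * X)‖ := mul_le_of_le_one_right (norm_nonneg (matOp (R * X))) hC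
    _ = ‖(matOp R).comp (matOp X)‖ := by rw [matOp_mul]
    _ ≤ ‖matOp R‖ * ‖matOp X‖ := ContinuousLinearMap.opNorm_comp_le _ _
    _ ≤ ‖matOp X‖ := mul_le_of_le_one_left (norm_nonneg (matOp X)) hR

section lift
open scoped Classical
variable {I : Type*} {H : I → Type*} [∀ i, NormedAddCommGroup (H i)]
  [∀ i, InnerProductSpace ℂ (H i)] [∀ i, CompleteSpace (H i)]

theorem brep_singleBlock {m n : ℕ} (i : I) (A : Matrix (Fin m) (Fin n) (H i →L[ℂ] H i)) :
    BRep (fun k j => singleBlock i (A k j))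
      (Function.update (fun i' => (0 : Matrix (Fin m) (Fin n) (H i' →L[ℂ] H i'))) i A) := by
  intro k j i' f
  rcases eq_or_ne i' i with rfl | hne
  · rw [singleBlock_apply, lp.single_apply_self, Function.update_self]
  · rw [singleBlock_apply, lp.single_apply_ne _ _ _ hne, Function.update_of_ne hne]
    simp

theorem singleBlock_mem (A : ∀ i', Set (H i' →L[ℂ] H i'))
    (h0 : ∀ i', (0 : H i' →L[ℂ] H i') ∈ A i')
    (i : I) (a : H i →L[ℂ] H i) (ha : a ∈ A i) : singleBlock i a ∈ blockDiagSet H A := by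
  intro i'
  rcases eq_or_ne i' i with rfl | hne
  · exact ⟨a, ha, fun f => by rw [singleBlock_apply, lp.single_apply_self]⟩
  · exact ⟨0, h0 i', fun f => by rw [singleBlock_apply, lp.single_apply_ne _ _ _ hne]; simp⟩

theorem norm_matOp_singleBlock_le {m n : ℕ} (i : I) (A : Matrix (Fin m) (Fin n) (H i →L[ℂ] H i))
    {c : ℝ} (hc : 0 ≤ c) (hA : ‖matOp A‖ ≤ c) :
    ‖matOp (fun k j => singleBlock i (A k j) :
      Matrix (Fin m) (Fin n) (lp (fun i => H i) 2 →L[ℂ] lp (fun i => H i) 2))‖ ≤ c := by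
  refine rep_norm_le (brep_singleBlock i A) hc fun i' => ?_
  rcases eq_or_ne i' i with rfl | hne
  · rwa [Function.update_self]
  · rw [Function.update_of_ne hne, matOp_zero]
    rw [ContinuousLinearMap.opNorm_zero]; exact hc

end lift

end auxiliary

/-- If each W*-inclusion (M_i, D_i) is norming, then the direct sum
inclusion (⊕ M_i, ⊕ D_i), acting block-diagonally on ⊕ H_i, is norming. -/
theorem stmt_14 {I : Type*} (H : I → Type*) [∀ i, NormedAddCommGroup (H i)]
    [∀ i, InnerProductSpace ℂ (H i)] [∀ i, CompleteSpace (H i)]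
    (M D : ∀ i, VonNeumannAlgebra (H i))
    (hDM : ∀ i, (D i : Set (H i →L[ℂ] H i)) ⊆ (M i : Set (H i →L[ℂ] H i)))
    (hnorm : ∀ i, NormsPair (D i : Set (H i →L[ℂ] H i)) (M i : Set (H i →L[ℂ] H i))) :
    NormsPair (blockDiagSet H fun i => (D i : Set (H i →L[ℂ] H i)))
      (blockDiagSet H fun i => (M i : Set (H i →L[ℂ] H i))) := by
  classical
  intro d X hX
  have hX' : ∀ (k j : Fin d) (i : I), ∃ y ∈ (M i : Set (H i →L[ℂ] H i)),
      ∀ f : lp (fun i => H i) 2, (X k j f) i = y (f i) := fun k j i => hX k j i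
  choose x hxM hxrep using hX'
  set x' : ∀ i, Matrix (Fin d) (Fin d) (H i →L[ℂ] H i) := fun i k j => x k j i with hx'def
  have hrep : BRep X x' := fun k j i f => hxrep k j i f
  have h0D : ∀ i : I, (0 : H i →L[ℂ] H i) ∈ (D i : Set (H i →L[ℂ] H i)) :=
    fun i => zero_mem (D i)
  have h0BD : (0 : lp (fun i => H i) 2 →L[ℂ] lp (fun i => H i) 2) ∈
      blockDiagSet H (fun i => (D i : Set (H i →L[ℂ] H i))) :=
    fun i => ⟨0, h0D i, fun f => by simp⟩
  refine (csSup_eq_of_forall_le_of_forall_lt_exists_gt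
    ⟨0, zero_mem_normSet h0BD d X⟩ (fun r hr => mem_normSet_le hr) ?_).symm
  intro w hw
  rcases lt_or_ge w 0 with hw0 | hw0
  · exact ⟨0, zero_mem_normSet h0BD d X, hw0⟩
  have hex : ∃ i, w < ‖matOp (x' i)‖ := by
    by_contra hcon
    push_neg at hcon
    exact absurd (rep_norm_le hrep hw0 hcon) (not_le.2 hw)
  obtain ⟨i, hi⟩ := hex
  rw [hnorm i d (x' i) (fun k j => hxM k j i)] at hi
  obtain ⟨r, hrmem, hwr⟩ :=
    exists_lt_of_lt_csSup ⟨0, zero_mem_normSet (h0D i) d (x' i)⟩ hi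
  obtain ⟨R, C₀, hRD, hCD, hRn, hCn, rfl⟩ := hrmem
  set R' : Matrix (Fin 1) (Fin d) (lp (fun i => H i) 2 →L[ℂ] lp (fun i => H i) 2) :=
    fun k j => singleBlock i (R k j) with hR'def
  set C' : Matrix (Fin d) (Fin 1) (lp (fun i => H i) 2 →L[ℂ] lp (fun i => H i) 2) :=
    fun k j => singleBlock i (C₀ k j) with hC'def
  have hrepR : BRep R' _ := brep_singleBlock i R
  have hrepC : BRep C' _ := brep_singleBlock i C₀
  have hrepAll := (hrepR.mul hrep).mul hrepC
  have hkey : ‖matOp (R * x' i * C₀)‖ ≤ ‖matOp (R' * X * C')‖ := by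
    have h := rep_norm_ge hrepAll i
    simpa [Function.update_self] using h
  refine ⟨‖matOp (R' * X * C')‖, ⟨R', C', ?_, ?_, ?_, ?_, rfl⟩, lt_of_lt_of_le hwr hkey⟩
  · exact fun k j => singleBlock_mem _ h0D i (R k j) (hRD k j)
  · exact fun k j => singleBlock_mem _ h0D i (C₀ k j) (hCD k j)
  · exact norm_matOp_singleBlock_le i R zero_le_one hRn
  · exact norm_matOp_singleBlock_le i C₀ zero_le_one hCn
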